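/- arXiv:1601.00236 — 3 statements merged into one kernel-verified Lean document; each statement's English description precedes it below -/
import Mathlib

section
/- Let X ∈ ℝ^{n×d} and Y ∈ ℝ^{n×m}, let E_X, E_Y be their squared Euclidean distance matrices, Ê_X = J E_X J and Ê_Y = J E_Y J their double centerings with J = I - (1/n)11ᵀ, and let L_Y be the Laplacian of the adjacency matrix Ê_Y (i.e., L_Y = D_Y - Ê_Y with D_Y the diagonal row-sum matrix of Ê_Y). Then Tr(Xᵀ L_Y X) = (1/2) Σ_{i,j} [Ê_X]_{ij} [Ê_Y]_{ij}. -/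
open Matrix BigOperators

noncomputable def centering (n : ℕ) : Matrix (Fin n) (Fin n) ℝ :=
  1 - (n : ℝ)⁻¹ • Matrix.of (fun _ _ => (1 : ℝ))

def sqDist {n d : ℕ} (X : Matrix (Fin n) (Fin d) ℝ) : Matrix (Fin n) (Fin n) ℝ :=
  Matrix.of (fun k l => ∑ j, (X k j - X l j) ^ 2)

lemma centering_symm (n : ℕ) : (centering n)ᵀ = centering n := by
  unfold centering
  ext i j
  simp [Matrix.transpose_apply, Matrix.one_apply, eq_comm]

lemma centering_rowsum {n : ℕ} (hn : 0 < n) (i : Fin n) :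
    ∑ j, centering n i j = 0 := by
  unfold centering
  have hn' : (n : ℝ) ≠ 0 := Nat.cast_ne_zero.mpr hn.ne'
  simp [Matrix.sub_apply, Matrix.one_apply, Finset.sum_sub_distrib, hn']

lemma mul_centering_rowsum {n : ℕ} (hn : 0 < n) (M : Matrix (Fin n) (Fin n) ℝ) (i : Fin n) :
    ∑ j, (M * centering n) i j = 0 := by
  simp only [Matrix.mul_apply]
  rw [Finset.sum_comm]
  simp [← Finset.mul_sum, centering_rowsum hn]

lemma centering_colsum {n : ℕ} (hn : 0 < n) (j : Fin n) :
    ∑ i, centering n i j = 0 := by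
  have := centering_rowsum hn j
  calc ∑ i, centering n i j = ∑ i, (centering n)ᵀ j i := rfl
  _ = 0 := by rw [centering_symm]; exact this

lemma const_row_mul_centering {n : ℕ} (hn : 0 < n) (a : Fin n → ℝ) :
    (Matrix.of (fun k _ : Fin n => a k)) * centering n = 0 := by
  ext k l
  simp only [Matrix.mul_apply, Matrix.of_apply, Matrix.zero_apply, ← Finset.mul_sum]
  rw [centering_colsum hn, mul_zero]

lemma centering_mul_const_col {n : ℕ} (hn : 0 < n) (a : Fin n → ℝ) :
    centering n * (Matrix.of (fun _ l : Fin n => a l)) = 0 := by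
  ext k l
  simp only [Matrix.mul_apply, Matrix.of_apply, Matrix.zero_apply]
  rw [← Finset.sum_mul, centering_rowsum hn, zero_mul]

lemma centering_idem {n : ℕ} (hn : 0 < n) : centering n * centering n = centering n := by
  have h : (Matrix.of (fun _ _ : Fin n => (1:ℝ))) * centering n = 0 :=
    const_row_mul_centering hn (fun _ => 1)
  nth_rewrite 1 [centering]
  rw [Matrix.sub_mul, Matrix.one_mul, Matrix.smul_mul, h, smul_zero, sub_zero]

lemma sqDist_decomp {n d : ℕ} (X : Matrix (Fin n) (Fin d) ℝ) :
    sqDist X = Matrix.of (fun k _ : Fin n => ∑ j, X k j ^ 2)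
      + Matrix.of (fun _ l : Fin n => ∑ j, X l j ^ 2)
      - (2 : ℝ) • (X * Xᵀ) := by
  ext k l
  simp only [sqDist, Matrix.of_apply, Matrix.sub_apply, Matrix.add_apply,
    Matrix.smul_apply, Matrix.mul_apply, Matrix.transpose_apply, smul_eq_mul,
    Finset.mul_sum]
  rw [← Finset.sum_add_distrib, ← Finset.sum_sub_distrib]
  congr 1; ext j; ring

lemma centered_sqDist {n d : ℕ} (hn : 0 < n) (X : Matrix (Fin n) (Fin d) ℝ) :
    centering n * sqDist X * centering n
      = (-2 : ℝ) • (centering n * (X * Xᵀ) * centering n) := by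
  rw [sqDist_decomp]
  rw [Matrix.mul_sub, Matrix.mul_add, Matrix.sub_mul, Matrix.add_mul]
  rw [centering_mul_const_col hn, Matrix.zero_mul]
  rw [Matrix.mul_assoc (centering n) _ (centering n),
    const_row_mul_centering hn, Matrix.mul_zero]
  simp [Matrix.mul_smul, Matrix.smul_mul]

lemma trace_mul_entrywise {n : ℕ} (A B : Matrix (Fin n) (Fin n) ℝ) (hB : Bᵀ = B) :
    (A * B).trace = ∑ i, ∑ j, A i j * B i j := by
  simp only [Matrix.trace, Matrix.diag, Matrix.mul_apply]
  apply Finset.sum_congr rfl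
  intro i _
  apply Finset.sum_congr rfl
  intro j _
  have : B j i = B i j := by nth_rewrite 1 [← hB]; rfl
  rw [this]

/-- Tr(Xᵀ L_Y X) = ½ Σ_{i,j} [Ê_X]_{ij} [Ê_Y]_{ij}. -/
theorem stmt2 {n d m : ℕ} (hn : 0 < n)
    (X : Matrix (Fin n) (Fin d) ℝ) (Y : Matrix (Fin n) (Fin m) ℝ) :
    let J := centering n
    let EX := J * sqDist X * J
    let EY := J * sqDist Y * J
    let LY := Matrix.diagonal (fun i => ∑ j, EY i j) - EY
    (Xᵀ * LY * X).trace = (1 / 2) * ∑ i, ∑ j, EX i j * EY i j := by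
  intro J EX EY LY
  have hJs : Jᵀ = J := centering_symm n
  have hJJ : J * J = J := centering_idem hn
  -- EY symmetric
  have hsqY : (sqDist Y)ᵀ = sqDist Y := by
    ext i j
    simp only [sqDist, Matrix.transpose_apply, Matrix.of_apply]
    congr 1; ext k; ring
  have hEYs : EYᵀ = EY := by
    show (J * sqDist Y * J)ᵀ = _
    rw [Matrix.transpose_mul, Matrix.transpose_mul, hJs, hsqY, ← Matrix.mul_assoc]
  -- row sums of EY are zero
  have hrow : ∀ i, ∑ j, EY i j = 0 := fun i =>
    mul_centering_rowsum hn (J * sqDist Y) i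
  have hLY : LY = -EY := by
    show Matrix.diagonal (fun i => ∑ j, EY i j) - EY = -EY
    have : (fun i => ∑ j, EY i j) = fun _ => (0:ℝ) := funext hrow
    rw [this, Matrix.diagonal_zero, zero_sub]
  -- LHS
  have hLHS : (Xᵀ * LY * X).trace = -((X * Xᵀ) * EY).trace := by
    rw [hLY]
    simp only [Matrix.mul_neg, Matrix.neg_mul, Matrix.trace_neg, neg_inj]
    rw [Matrix.trace_mul_comm (Xᵀ * EY) X, ← Matrix.mul_assoc]
  -- EX in Gram form
  have hEX : EX = (-2 : ℝ) • (J * (X * Xᵀ) * J) := centered_sqDist hn X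
  -- RHS
  have hRHS : ∑ i, ∑ j, EX i j * EY i j = (EX * EY).trace :=
    (trace_mul_entrywise EX EY hEYs).symm
  rw [hLHS, hRHS, hEX]
  rw [Matrix.smul_mul, Matrix.trace_smul]
  have hJE : J * EY = EY := by
    show J * (J * sqDist Y * J) = J * sqDist Y * J
    simp only [← Matrix.mul_assoc, hJJ]
  have hEJ : EY * J = EY := by
    show J * sqDist Y * J * J = J * sqDist Y * J
    rw [Matrix.mul_assoc (J * sqDist Y) J J, hJJ]
  have key : (J * (X * Xᵀ) * J * EY).trace = ((X * Xᵀ) * EY).trace := by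
    have : J * (X * Xᵀ) * J * EY = J * ((X * Xᵀ) * EY) := by
      rw [Matrix.mul_assoc (J * (X * Xᵀ)), hJE, Matrix.mul_assoc]
    rw [this, Matrix.trace_mul_comm, Matrix.mul_assoc, hEJ]
  rw [key, smul_eq_mul]; ring
end

section
/- Let Ê_X = J E_X J and Ê_Y = J E_Y J be double-centered squared-distance matrices and L_X, L_Y the Laplacians of adjacency matrices Ê_X, Ê_Y respectively. Then Tr(Xᵀ L_Y X) = Tr(Yᵀ L_X Y), i.e., the sample distance covariance ν̂²(X,Y) = (2/n²) Tr(Xᵀ L_Y X) is symmetric in X and Y. -/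
open Matrix BigOperators

lemma sqDist_symm {n d : ℕ} (X : Matrix (Fin n) (Fin d) ℝ) : (sqDist X)ᵀ = sqDist X := by
  ext i j
  simp only [sqDist, Matrix.transpose_apply, Matrix.of_apply]
  exact Finset.sum_congr rfl (fun k _ => by ring)

lemma trace_mul_transpose {n : ℕ} (A B : Matrix (Fin n) (Fin n) ℝ) :
    (A * Bᵀ).trace = ∑ k, ∑ l, A k l * B k l := by
  simp [Matrix.trace, Matrix.mul_apply, Matrix.diag]

lemma double_sum_lap {n : ℕ} (B : Matrix (Fin n) (Fin n) ℝ)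
    (hS : ∀ k l, B l k = B k l) (x : Fin n → ℝ) :
    ∑ l, (∑ k, x k * ((if k = l then ∑ i, B k i else 0) - B k l)) * x l
      = 2⁻¹ * ∑ k, ∑ l, B k l * (x k - x l) ^ 2 := by
  have h1 : ∀ l, (∑ k, x k * ((if k = l then ∑ i, B k i else 0) - B k l)) * x l
      = (∑ i, B l i * (x l * x l)) - ∑ k, B k l * (x k * x l) := by
    intro l
    rw [Finset.sum_mul]
    have hterm : ∀ k, x k * ((if k = l then ∑ i, B k i else 0) - B k l) * x l
        = (if k = l then ∑ i, B k i * (x l * x l) else 0) - B k l * (x k * x l) := by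
      intro k
      split_ifs with h
      · subst h
        rw [show (∑ i, B k i * (x k * x k)) = (∑ i, B k i) * (x k * x k) from
          (Finset.sum_mul _ _ _).symm]
        ring
      · ring
    rw [Finset.sum_congr rfl (fun k _ => hterm k), Finset.sum_sub_distrib,
      Finset.sum_ite_eq' Finset.univ l (fun k => ∑ i, B k i * (x l * x l))]
    simp
  rw [Finset.sum_congr rfl (fun l _ => h1 l), Finset.sum_sub_distrib]
  have hA : ∑ k, ∑ l, B k l * (x k - x l) ^ 2
      = ∑ k, ∑ l, (B k l * (x k * x k) + B k l * (x l * x l) - 2 * (B k l * (x k * x l))) :=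
    Finset.sum_congr rfl (fun k _ => Finset.sum_congr rfl (fun l _ => by ring))
  have hsplit : ∑ k, ∑ l, (B k l * (x k * x k) + B k l * (x l * x l)
        - 2 * (B k l * (x k * x l)))
      = (∑ k, ∑ l, B k l * (x k * x k)) + (∑ k, ∑ l, B k l * (x l * x l))
        - 2 * ∑ k, ∑ l, B k l * (x k * x l) := by
    simp [Finset.sum_add_distrib, Finset.sum_sub_distrib, Finset.mul_sum]
  have hswap : ∑ k, ∑ l, B k l * (x l * x l) = ∑ k, ∑ l, B k l * (x k * x k) := by
    rw [Finset.sum_comm]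
    exact Finset.sum_congr rfl (fun l _ => Finset.sum_congr rfl (fun k _ => by rw [hS k l]))
  have hcomm : ∑ k, ∑ l, B k l * (x k * x l) = ∑ l, ∑ k, B k l * (x k * x l) :=
    Finset.sum_comm
  rw [hA, hsplit, hswap, hcomm]
  ring

lemma quadform_lap {n d : ℕ} (B : Matrix (Fin n) (Fin n) ℝ) (hB : Bᵀ = B)
    (X : Matrix (Fin n) (Fin d) ℝ) :
    (Xᵀ * (Matrix.diagonal (fun i => ∑ j, B i j) - B) * X).trace
      = 2⁻¹ * ∑ k, ∑ l, B k l * sqDist X k l := by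
  have hBsym : ∀ k l, B l k = B k l := by
    intro k l
    conv_lhs => rw [← hB]
    exact Matrix.transpose_apply B l k
  have tr : (Xᵀ * (Matrix.diagonal (fun i => ∑ j, B i j) - B) * X).trace
      = ∑ j : Fin d, ∑ l, (∑ k, X k j * ((if k = l then ∑ i, B k i else 0) - B k l)) * X l j := by
    simp only [Matrix.trace, Matrix.diag_apply, Matrix.mul_apply, Matrix.transpose_apply,
      Matrix.sub_apply, Matrix.diagonal_apply]
  rw [tr, Finset.sum_congr rfl (fun j _ => double_sum_lap B hBsym (fun k => X k j)),
    ← Finset.mul_sum]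
  congr 1
  rw [Finset.sum_comm]
  refine Finset.sum_congr rfl (fun k _ => ?_)
  rw [Finset.sum_comm]
  refine Finset.sum_congr rfl (fun l _ => ?_)
  rw [← Finset.mul_sum]
  rfl

/-- Symmetry of the sample distance covariance: Tr(Xᵀ L_Y X) = Tr(Yᵀ L_X Y). -/
theorem stmt3 {n d m : ℕ} (hn : 0 < n)
    (X : Matrix (Fin n) (Fin d) ℝ) (Y : Matrix (Fin n) (Fin m) ℝ) :
    let J := centering n
    let EX := J * sqDist X * J
    let EY := J * sqDist Y * J
    let LX := Matrix.diagonal (fun i => ∑ j, EX i j) - EX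
    let LY := Matrix.diagonal (fun i => ∑ j, EY i j) - EY
    (Xᵀ * LY * X).trace = (Yᵀ * LX * Y).trace := by
  intro J EX EY LX LY
  have hJ : Jᵀ = J := centering_symm n
  have hEX : EXᵀ = EX := by
    show (J * sqDist X * J)ᵀ = J * sqDist X * J
    rw [Matrix.transpose_mul, Matrix.transpose_mul, hJ, sqDist_symm, Matrix.mul_assoc]
  have hEY : EYᵀ = EY := by
    show (J * sqDist Y * J)ᵀ = J * sqDist Y * J
    rw [Matrix.transpose_mul, Matrix.transpose_mul, hJ, sqDist_symm, Matrix.mul_assoc]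
  rw [show LY = Matrix.diagonal (fun i => ∑ j, EY i j) - EY from rfl,
    quadform_lap EY hEY X,
    show LX = Matrix.diagonal (fun i => ∑ j, EX i j) - EX from rfl,
    quadform_lap EX hEX Y]
  congr 1
  have key : (EY * (sqDist X)ᵀ).trace = (EX * (sqDist Y)ᵀ).trace := by
    rw [sqDist_symm X, sqDist_symm Y]
    calc (EY * sqDist X).trace
        = (J * (sqDist Y * (J * sqDist X))).trace := by
          rw [show EY * sqDist X = J * (sqDist Y * (J * sqDist X)) by
            show J * sqDist Y * J * sqDist X = _
            simp only [Matrix.mul_assoc]]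
      _ = ((sqDist Y * (J * sqDist X)) * J).trace := Matrix.trace_mul_comm _ _
      _ = (sqDist Y * EX).trace := by
          rw [show sqDist Y * (J * sqDist X) * J = sqDist Y * EX by
            show _ = sqDist Y * (J * sqDist X * J)
            simp only [Matrix.mul_assoc]]
      _ = (EX * sqDist Y).trace := Matrix.trace_mul_comm _ _
  rw [← trace_mul_transpose EY (sqDist X), ← trace_mul_transpose EX (sqDist Y)]
  exact key
end

section
/- Let A₁, A₂ be real symmetric n×n matrices with A₂ positive definite, and let h(z) = (zᵀA₁z)/(zᵀA₂z) for z ≠ 0. Then z* ≠ 0 minimizes h if and only if z* minimizes H(z; α*) = zᵀA₁z - α* zᵀA₂z over the unit sphere, where α* = min_{z≠0} h(z); moreover min_{‖z‖=1} H(z; α*) = 0. -/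
open Matrix BigOperators

private lemma quad_smul {n : ℕ} (A : Matrix (Fin n) (Fin n) ℝ) (c : ℝ) (z : Fin n → ℝ) :
    (c • z) ⬝ᵥ A.mulVec (c • z) = c ^ 2 * (z ⬝ᵥ A.mulVec z) := by
  rw [Matrix.mulVec_smul, smul_dotProduct, dotProduct_smul, smul_eq_mul, smul_eq_mul]
  ring

private lemma quad_cont {n : ℕ} (A : Matrix (Fin n) (Fin n) ℝ) :
    Continuous fun z : Fin n → ℝ => z ⬝ᵥ A.mulVec z := by
  simp only [dotProduct, Matrix.mulVec, dotProduct]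
  fun_prop

/-- Dinkelbach equivalence: z* ≠ 0 minimizes the Rayleigh ratio h iff z* minimizes
    H(·; α*) over the unit sphere, where α* = min h; moreover min_{‖z‖=1} H(z; α*) = 0. -/
theorem stmt17 {n : ℕ} (hn : 0 < n) (A₁ A₂ : Matrix (Fin n) (Fin n) ℝ)
    (h1 : A₁.IsSymm) (h2 : A₂.PosDef) :
    let h : (Fin n → ℝ) → ℝ := fun z => (z ⬝ᵥ A₁.mulVec z) / (z ⬝ᵥ A₂.mulVec z)
    let αstar : ℝ := sInf (h '' {z | z ≠ 0})
    let H : (Fin n → ℝ) → ℝ := fun z => z ⬝ᵥ A₁.mulVec z - αstar * (z ⬝ᵥ A₂.mulVec z)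
    (∀ z : Fin n → ℝ, z ≠ 0 →
      ((∀ w : Fin n → ℝ, w ≠ 0 → h z ≤ h w)
        ↔ (∀ w : Fin n → ℝ, ∑ i, w i ^ 2 = 1 → H z ≤ H w)))
    ∧ sInf (H '' {w | ∑ i, w i ^ 2 = 1}) = 0 := by
  intro h αstar H
  -- positivity of denominator
  have pos : ∀ z : Fin n → ℝ, z ≠ 0 → 0 < z ⬝ᵥ A₂.mulVec z := by
    intro z hz
    have := h2.dotProduct_mulVec_pos hz
    simpa using this
  have sq_pos : ∀ z : Fin n → ℝ, z ≠ 0 → 0 < ∑ i, z i ^ 2 := by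
    intro z hz
    obtain ⟨i, hi⟩ := Function.ne_iff.mp hz
    refine Finset.sum_pos' (fun j _ => sq_nonneg _) ⟨i, Finset.mem_univ i, ?_⟩
    exact pow_pos (abs_pos.mpr hi) 2 |>.trans_eq (sq_abs _)
  -- sphere members are nonzero
  have sph_ne : ∀ w : Fin n → ℝ, (∑ i, w i ^ 2 = 1) → w ≠ 0 := by
    intro w hw h0
    simp [h0] at hw
  -- normalization: every nonzero z has a sphere representative with same h value
  have norm : ∀ z : Fin n → ℝ, z ≠ 0 → ∃ w : Fin n → ℝ, (∑ i, w i ^ 2 = 1) ∧ h w = h z := by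
    intro z hz
    have hs := sq_pos z hz
    set s := Real.sqrt (∑ i, z i ^ 2) with hs_def
    have hs0 : 0 < s := Real.sqrt_pos.mpr hs
    refine ⟨s⁻¹ • z, ?_, ?_⟩
    · have : ∀ i, (s⁻¹ • z) i ^ 2 = s⁻¹ ^ 2 * z i ^ 2 := by
        intro i; simp [Pi.smul_apply, mul_pow]
      rw [Finset.sum_congr rfl (fun i _ => this i), ← Finset.mul_sum]
      rw [inv_pow, hs_def, Real.sq_sqrt hs.le]
      exact inv_mul_cancel₀ hs.ne'
    · show _ / _ = _ / _
      rw [quad_smul, quad_smul, mul_div_mul_left _ _ (by positivity)]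
  -- compact sphere
  have Sne : ∃ w : Fin n → ℝ, ∑ i, w i ^ 2 = 1 := by
    refine ⟨Pi.single ⟨0, hn⟩ 1, ?_⟩
    rw [Finset.sum_eq_single ⟨0, hn⟩]
    · simp
    · intro j _ hj; simp [Pi.single_apply, hj]
    · simp
  have Scpt : IsCompact {w : Fin n → ℝ | ∑ i, w i ^ 2 = 1} := by
    have hcl : IsClosed {w : Fin n → ℝ | ∑ i, w i ^ 2 = 1} :=
      isClosed_eq (by fun_prop) continuous_const
    refine (isCompact_closedBall (0 : Fin n → ℝ) 1).of_isClosed_subset hcl ?_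
    intro w hw
    rw [Metric.mem_closedBall, dist_zero_right]
    refine (pi_norm_le_iff_of_nonneg zero_le_one).mpr fun i => ?_
    rw [Real.norm_eq_abs, ← Real.sqrt_one, ← Real.sqrt_sq_eq_abs]
    refine Real.sqrt_le_sqrt ?_
    calc w i ^ 2 ≤ ∑ j, w j ^ 2 :=
          Finset.single_le_sum (f := fun j => w j ^ 2) (fun j _ => sq_nonneg _) (Finset.mem_univ i)
      _ = 1 := hw
  -- minimizer of h on the sphere
  obtain ⟨w0, hw0S, hw0min⟩ :
      ∃ w0, (∑ i, w0 i ^ 2 = 1) ∧ ∀ w, (∑ i, w i ^ 2 = 1) → h w0 ≤ h w := by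
    have hcont : ContinuousOn h {w : Fin n → ℝ | ∑ i, w i ^ 2 = 1} := by
      apply ContinuousOn.div (quad_cont A₁).continuousOn (quad_cont A₂).continuousOn
      intro w hw; exact (pos w (sph_ne w hw)).ne'
    obtain ⟨w0, hw0, hmin⟩ := Scpt.exists_isMinOn Sne hcont
    exact ⟨w0, hw0, fun w hw => hmin hw⟩
  -- h w0 is a global lower bound over nonzero vectors
  have glb : ∀ z : Fin n → ℝ, z ≠ 0 → h w0 ≤ h z := by
    intro z hz
    obtain ⟨w, hwS, hwe⟩ := norm z hz
    exact hwe ▸ hw0min w hwS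
  -- αstar = h w0
  have hα : αstar = h w0 := by
    apply le_antisymm
    · exact csInf_le ⟨h w0, by rintro x ⟨z, hz, rfl⟩; exact glb z hz⟩
        ⟨w0, sph_ne w0 hw0S, rfl⟩
    · exact le_csInf ⟨h w0, w0, sph_ne w0 hw0S, rfl⟩ (by rintro x ⟨z, hz, rfl⟩; exact glb z hz)
  -- key identity: H z = (h z - αstar) * q2 z
  have Hid : ∀ z : Fin n → ℝ, z ≠ 0 → H z = (h z - αstar) * (z ⬝ᵥ A₂.mulVec z) := by
    intro z hz
    have hq2 : (z ⬝ᵥ A₂.mulVec z) ≠ 0 := (pos z hz).ne'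
    show _ - _ = _
    rw [show h z = (z ⬝ᵥ A₁.mulVec z) / (z ⬝ᵥ A₂.mulVec z) from rfl, sub_mul, div_mul_cancel₀ _ hq2]
  have Hnonneg : ∀ w : Fin n → ℝ, (∑ i, w i ^ 2 = 1) → 0 ≤ H w := by
    intro w hw
    rw [Hid w (sph_ne w hw)]
    have : αstar ≤ h w := hα ▸ hw0min w hw
    exact mul_nonneg (by linarith) (pos w (sph_ne w hw)).le
  have Hw0 : H w0 = 0 := by
    rw [Hid w0 (sph_ne w0 hw0S), hα, sub_self, zero_mul]
  constructor
  · intro z hz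
    constructor
    · intro hmin w hwS
      have h1' : h z ≤ h w0 := hmin w0 (sph_ne w0 hw0S)
      have h2' : h w0 ≤ h z := glb z hz
      have : H z = 0 := by
        rw [Hid z hz, hα]
        have : h z = h w0 := le_antisymm h1' h2'
        rw [this, sub_self, zero_mul]
      rw [this]
      exact Hnonneg w hwS
    · intro hmin w hw
      have hz0 : H z ≤ 0 := Hw0 ▸ hmin w0 hw0S
      rw [Hid z hz] at hz0
      have hza : h z ≤ αstar := by
        by_contra hc
        push_neg at hc
        nlinarith [pos z hz]
      obtain ⟨w', hw'S, hw'e⟩ := norm w hw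
      calc h z ≤ αstar := hza
        _ = h w0 := hα
        _ ≤ h w' := hw0min w' hw'S
        _ = h w := hw'e
  · apply le_antisymm
    · exact csInf_le ⟨0, by rintro x ⟨w, hw, rfl⟩; exact Hnonneg w hw⟩
        ⟨w0, hw0S, Hw0⟩
    · exact le_csInf ⟨H w0, w0, hw0S, rfl⟩ (by rintro x ⟨w, hw, rfl⟩; exact Hnonneg w hw)
end
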